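/- Under the assumptions M ⊥ R | X, G=2 (MAR in domain 2) and M ⊥ G | X (selection at random), for every x and m: p(M=m | X=x, R=0, G=1) · p(R=0 | X=x, G=1) = p(M=m | X=x, R=1, G=2) − p(M=m, R=1 | X=x, G=1). -/

import Mathlib

open Finset Set Real

noncomputable def Pr {Ω : Type*} [Fintype Ω] (μ : Ω → ℝ) (A : Set Ω) : ℝ :=
  ∑ ω, A.indicator μ ω

noncomputable def cPr {Ω : Type*} [Fintype Ω] (μ : Ω → ℝ) (A B : Set Ω) : ℝ :=
  Pr μ (A ∩ B) / Pr μ B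

noncomputable def cE {Ω : Type*} [Fintype Ω] (μ : Ω → ℝ) (f : Ω → ℝ) (B : Set Ω) : ℝ :=
  (∑ ω, B.indicator (fun ω' => μ ω' * f ω') ω) / Pr μ B

/-!
Selection at random makes `P(M = m | X = x, G = g)` independent of `g`, and MAR in domain 2
lets one further condition on `R = 1` there, so
`P(M = m | X = x, G = 1) = P(M = m | X = x, R = 1, G = 2)`.
The identity is this equality with its left side split over the two values of `R`.
-/

section
variable {Ω : Type*} [Fintype Ω] {μ : Ω → ℝ} {A B C : Set Ω}

lemma Pr_mono (hμ : ∀ ω, 0 ≤ μ ω) (h : A ⊆ B) : Pr μ A ≤ Pr μ B :=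
  Finset.sum_le_sum fun ω _ => Set.indicator_le_indicator_of_subset h hμ ω

lemma Pr_inter_add_Pr_inter_compl : Pr μ (A ∩ B) + Pr μ (A ∩ Bᶜ) = Pr μ A := by
  simp only [Pr, Set.inter_comm A, ← Set.indicator_indicator, ← Finset.sum_add_distrib,
    Set.indicator_self_add_compl_apply]

lemma cPr_inter_add_cPr_inter_compl :
    cPr μ (A ∩ B) C + cPr μ (A ∩ Bᶜ) C = cPr μ A C := by
  rw [cPr, cPr, cPr, ← add_div, Set.inter_right_comm A B C, Set.inter_right_comm A Bᶜ C,
    Pr_inter_add_Pr_inter_compl]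

lemma cPr_mul_cPr (hBC : Pr μ (B ∩ C) ≠ 0) :
    cPr μ A (B ∩ C) * cPr μ B C = cPr μ (A ∩ B) C := by
  rw [cPr, cPr, cPr, div_mul_div_cancel₀ hBC, Set.inter_assoc]

lemma cPr_inter_eq_cPr_of_condIndep (hind : cPr μ (A ∩ B) C = cPr μ A C * cPr μ B C)
    (hC : Pr μ C ≠ 0) (hBC : Pr μ (B ∩ C) ≠ 0) : cPr μ A (B ∩ C) = cPr μ A C :=
  mul_right_cancel₀ (div_ne_zero hBC hC) ((cPr_mul_cPr hBC).trans hind)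

lemma cPr_missing_eq_of_MAR_of_SAR (hμ : ∀ ω, 0 ≤ μ ω) {X M R₀ R₁ G₁ G₂ : Set Ω}
    (hR : R₀ = R₁ᶜ)
    (h₀₁ : 0 < Pr μ (X ∩ (M ∩ (R₀ ∩ G₁)))) (h₁₂ : 0 < Pr μ (X ∩ (M ∩ (R₁ ∩ G₂))))
    (hMAR : 0 < Pr μ (X ∩ G₂) →
      cPr μ (M ∩ R₁) (X ∩ G₂) = cPr μ M (X ∩ G₂) * cPr μ R₁ (X ∩ G₂))
    (hSel₁ : 0 < Pr μ X → cPr μ (M ∩ G₁) X = cPr μ M X * cPr μ G₁ X)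
    (hSel₂ : 0 < Pr μ X → cPr μ (M ∩ G₂) X = cPr μ M X * cPr μ G₂ X) :
    cPr μ M (X ∩ (R₀ ∩ G₁)) * cPr μ R₀ (X ∩ G₁) =
      cPr μ M (X ∩ (R₁ ∩ G₂)) - cPr μ (M ∩ R₁) (X ∩ G₁) := by
  have pos {S T : Set Ω} (hS : 0 < Pr μ S) (hST : S ⊆ T) : 0 < Pr μ T :=
    hS.trans_le (Pr_mono hμ hST)
  have hX : 0 < Pr μ X := pos h₀₁ inter_subset_left
  have hXG₂ : 0 < Pr μ (X ∩ G₂) := pos h₁₂ <| by rintro ω ⟨hx, -, -, hg⟩; exact ⟨hx, hg⟩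
  have hG₁X : 0 < Pr μ (G₁ ∩ X) := pos h₀₁ <| by rintro ω ⟨hx, -, -, hg⟩; exact ⟨hg, hx⟩
  have hG₂X : 0 < Pr μ (G₂ ∩ X) := pos h₁₂ <| by rintro ω ⟨hx, -, -, hg⟩; exact ⟨hg, hx⟩
  have hR₀XG₁ : 0 < Pr μ (R₀ ∩ (X ∩ G₁)) := pos h₀₁ <| by
    rintro ω ⟨hx, -, hr, hg⟩; exact ⟨hr, hx, hg⟩
  have hR₁XG₂ : 0 < Pr μ (R₁ ∩ (X ∩ G₂)) := pos h₁₂ <| by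
    rintro ω ⟨hx, -, hr, hg⟩; exact ⟨hr, hx, hg⟩
  have hSel₁' : cPr μ M (X ∩ G₁) = cPr μ M X := by
    rw [Set.inter_comm]
    exact cPr_inter_eq_cPr_of_condIndep (hSel₁ hX) hX.ne' hG₁X.ne'
  have hSel₂' : cPr μ M (X ∩ G₂) = cPr μ M X := by
    rw [Set.inter_comm]
    exact cPr_inter_eq_cPr_of_condIndep (hSel₂ hX) hX.ne' hG₂X.ne'
  have hMAR' : cPr μ M (X ∩ (R₁ ∩ G₂)) = cPr μ M (X ∩ G₂) := by
    rw [Set.inter_left_comm]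
    exact cPr_inter_eq_cPr_of_condIndep (hMAR hXG₂) hXG₂.ne' hR₁XG₂.ne'
  have hchain : cPr μ M (X ∩ (R₀ ∩ G₁)) * cPr μ R₀ (X ∩ G₁) = cPr μ (M ∩ R₀) (X ∩ G₁) := by
    rw [Set.inter_left_comm]
    exact cPr_mul_cPr hR₀XG₁.ne'
  have hsplit : cPr μ (M ∩ R₁) (X ∩ G₁) + cPr μ (M ∩ R₀) (X ∩ G₁) = cPr μ M (X ∩ G₁) := by
    rw [hR]
    exact cPr_inter_add_cPr_inter_compl
  linarith

end

theorem stmt9_general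
    {Ω 𝓧 𝓜 : Type*} [Fintype Ω]
    (μ : Ω → ℝ) (X : Ω → 𝓧) (M : Ω → 𝓜) (R G : Ω → ℕ)
    (hμ0 : ∀ ω, 0 ≤ μ ω)
    (hR : ∀ ω, R ω = 0 ∨ R ω = 1)
    (hpos : ∀ x ∈ Set.range X, ∀ m ∈ Set.range M, ∀ r g : ℕ,
      (r = 0 ∨ r = 1) → (g = 1 ∨ g = 2) →
      0 < Pr μ {ω | X ω = x ∧ M ω = m ∧ R ω = r ∧ G ω = g})
    (hMAR : ∀ (m : 𝓜) (r : ℕ) (x : 𝓧),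
      0 < Pr μ {ω | X ω = x ∧ G ω = 2} →
      cPr μ {ω | M ω = m ∧ R ω = r} {ω | X ω = x ∧ G ω = 2} =
        cPr μ {ω | M ω = m} {ω | X ω = x ∧ G ω = 2} *
        cPr μ {ω | R ω = r} {ω | X ω = x ∧ G ω = 2})
    (hSel : ∀ (m : 𝓜) (g : ℕ) (x : 𝓧),
      0 < Pr μ {ω | X ω = x} →
      cPr μ {ω | M ω = m ∧ G ω = g} {ω | X ω = x} =
        cPr μ {ω | M ω = m} {ω | X ω = x} * cPr μ {ω | G ω = g} {ω | X ω = x})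
 :
    ∀ x ∈ Set.range X, ∀ m ∈ Set.range M,
      cPr μ {ω | M ω = m} {ω | X ω = x ∧ R ω = 0 ∧ G ω = 1} *
          cPr μ {ω | R ω = 0} {ω | X ω = x ∧ G ω = 1} =
        cPr μ {ω | M ω = m} {ω | X ω = x ∧ R ω = 1 ∧ G ω = 2} -
          cPr μ {ω | M ω = m ∧ R ω = 1} {ω | X ω = x ∧ G ω = 1} := by
  intro x hx m hm
  have hR01 : {ω | R ω = 0} = {ω | R ω = 1}ᶜ := by
    ext ω
    simp only [mem_ofPred_eq, mem_compl_iff]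
    rcases hR ω with h | h <;> simp [h]
  exact cPr_missing_eq_of_MAR_of_SAR hμ0 hR01
    (hpos x hx m hm 0 1 (.inl rfl) (.inl rfl)) (hpos x hx m hm 1 2 (.inr rfl) (.inr rfl))
    (hMAR m 1 x) (hSel m 1 x) (hSel m 2 x)

theorem stmt9
    {Ω 𝓧 𝓜 : Type*} [Fintype Ω]
    (μ : Ω → ℝ) (X : Ω → 𝓧) (M : Ω → 𝓜) (R G : Ω → ℕ)
    (hμ0 : ∀ ω, 0 ≤ μ ω) (hμ1 : ∑ ω, μ ω = 1)
    (hR : ∀ ω, R ω = 0 ∨ R ω = 1)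
    (hG : ∀ ω, G ω = 1 ∨ G ω = 2)
    (hpos : ∀ x ∈ Set.range X, ∀ m ∈ Set.range M, ∀ r g : ℕ,
      (r = 0 ∨ r = 1) → (g = 1 ∨ g = 2) →
      0 < Pr μ {ω | X ω = x ∧ M ω = m ∧ R ω = r ∧ G ω = g})
    (hMAR : ∀ (m : 𝓜) (r : ℕ) (x : 𝓧),
      0 < Pr μ {ω | X ω = x ∧ G ω = 2} →
      cPr μ {ω | M ω = m ∧ R ω = r} {ω | X ω = x ∧ G ω = 2} =
        cPr μ {ω | M ω = m} {ω | X ω = x ∧ G ω = 2} *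
        cPr μ {ω | R ω = r} {ω | X ω = x ∧ G ω = 2})
    (hSel : ∀ (m : 𝓜) (g : ℕ) (x : 𝓧),
      0 < Pr μ {ω | X ω = x} →
      cPr μ {ω | M ω = m ∧ G ω = g} {ω | X ω = x} =
        cPr μ {ω | M ω = m} {ω | X ω = x} * cPr μ {ω | G ω = g} {ω | X ω = x})
 :
    ∀ x ∈ Set.range X, ∀ m ∈ Set.range M,
      cPr μ {ω | M ω = m} {ω | X ω = x ∧ R ω = 0 ∧ G ω = 1} *
          cPr μ {ω | R ω = 0} {ω | X ω = x ∧ G ω = 1} =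
        cPr μ {ω | M ω = m} {ω | X ω = x ∧ R ω = 1 ∧ G ω = 2} -
          cPr μ {ω | M ω = m ∧ R ω = 1} {ω | X ω = x ∧ G ω = 1} :=
  stmt9_general μ X M R G hμ0 hR hpos hMAR hSel
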